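/- Let p_1, …, p_K ∈ ℝ^d be pairwise distinct sites with labels λ_1, …, λ_K ∈ {0,1}, with at least one label equal to 1 and at least one equal to 0, and let q ∈ ℝ^d with q ∉ {p_1, …, p_K} be a new site assigned label 1. If the Voronoi cell of q in the augmented diagram, namely {x ∈ ℝ^d : ‖x − q‖ ≤ ‖x − p_k‖ for all k}, is contained in the Voronoi occupancy set O(P,λ), then the Voronoi occupancy set of the augmented configuration equals that of the original: O(P ∪ {q}, λ with λ_q = 1) = O(P, λ). -/

import Mathlib

/-- The Voronoi occupancy set of labeled sites: points whose distance to the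
nearest `true`-labeled site is at most the distance to the nearest
`false`-labeled site. -/
noncomputable def voronoiOcc {d K : ℕ} (p : Fin K → EuclideanSpace ℝ (Fin d))
    (lab : Fin K → Bool) : Set (EuclideanSpace ℝ (Fin d)) :=
  {x | (⨅ k : {k : Fin K // lab k = true}, dist x (p k.1)) ≤
       ⨅ k : {k : Fin K // lab k = false}, dist x (p k.1)}

/-!
Adding the `true` site `q` leaves the distance `F x` from `x` to the nearest `false` site unchanged
and replaces the distance `T x` to the nearest `true` site by `min (dist x q) (T x)`. The new
occupancy set is therefore the old one together with `{x | dist x q ≤ F x}`. A point of the latter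
outside the old set satisfies `dist x q ≤ F x < T x`, so it lies in the Voronoi cell of `q`, hence
in the old set after all.
-/

namespace Fin

variable {n : ℕ} {β γ : Type*} (g : Fin n → γ) (c : γ) (lab : Fin n → β)

theorem image_snoc_setOf_snoc_of_ne {v b : β} (h : v ≠ b) :
    (snoc g c : Fin (n + 1) → γ) '' {k | (snoc lab v : Fin (n + 1) → β) k = b} =
      g '' {k | lab k = b} := by
  ext y
  simp [Fin.exists_fin_succ', h]

theorem image_snoc_setOf_snoc_self (v : β) :
    (snoc g c : Fin (n + 1) → γ) '' {k | (snoc lab v : Fin (n + 1) → β) k = v} =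
      insert c (g '' {k | lab k = v}) := by
  ext y
  simp [Fin.exists_fin_succ', or_comm, eq_comm]

end Fin

-- Over an empty label class this is `sInf ∅ = 0`.
noncomputable def nearestDist {ι α : Type*} [PseudoMetricSpace α] (p : ι → α) (lab : ι → Bool)
    (b : Bool) (x : α) : ℝ :=
  ⨅ k : {k // lab k = b}, dist x (p k.1)

section NearestDist

variable {ι α : Type*} [PseudoMetricSpace α] (p : ι → α) (lab : ι → Bool) (x : α)

theorem nearestDist_eq_sInf_image (b : Bool) :
    nearestDist p lab b x = sInf ((fun k ↦ dist x (p k)) '' {k | lab k = b}) := by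
  rw [sInf_image']
  rfl

theorem nearestDist_le_dist (k : ι) : nearestDist p lab (lab k) x ≤ dist x (p k) :=
  ciInf_le ⟨0, Set.forall_mem_range.2 fun _ ↦ dist_nonneg⟩ (⟨k, rfl⟩ : {i // lab i = lab k})

end NearestDist

section Snoc

variable {n : ℕ} {α : Type*} [PseudoMetricSpace α] (p : Fin n → α) (q : α) (lab : Fin n → Bool)
  (x : α)

theorem nearestDist_snoc_of_ne {v b : Bool} (h : v ≠ b) :
    nearestDist (Fin.snoc p q) (Fin.snoc lab v) b x = nearestDist p lab b x := by
  rw [nearestDist_eq_sInf_image, nearestDist_eq_sInf_image, ← Function.comp_def, Fin.comp_snoc,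
    Fin.image_snoc_setOf_snoc_of_ne _ _ _ h]
  rfl

theorem nearestDist_snoc_self {v : Bool} (hv : ∃ k, lab k = v) :
    nearestDist (Fin.snoc p q) (Fin.snoc lab v) v x = min (dist x q) (nearestDist p lab v x) := by
  rw [nearestDist_eq_sInf_image, nearestDist_eq_sInf_image, ← Function.comp_def, Fin.comp_snoc,
    Fin.image_snoc_setOf_snoc_self, csInf_insert]
  · rfl
  · exact ⟨0, Set.forall_mem_image.2 fun _ _ ↦ dist_nonneg⟩
  · obtain ⟨k, hk⟩ := hv
    exact ⟨_, k, hk, rfl⟩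

end Snoc

theorem mem_voronoiOcc {d K : ℕ} {p : Fin K → EuclideanSpace ℝ (Fin d)} {lab : Fin K → Bool}
    {x : EuclideanSpace ℝ (Fin d)} :
    x ∈ voronoiOcc p lab ↔ nearestDist p lab true x ≤ nearestDist p lab false x :=
  Iff.rfl

theorem mem_voronoiOcc_of_dist_le_nearestDist_false {d K : ℕ}
    {p : Fin K → EuclideanSpace ℝ (Fin d)} {lab : Fin K → Bool} {q : EuclideanSpace ℝ (Fin d)}
    (hcell : {x : EuclideanSpace ℝ (Fin d) | ∀ k, dist x q ≤ dist x (p k)} ⊆ voronoiOcc p lab)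
    {x : EuclideanSpace ℝ (Fin d)} (hx : dist x q ≤ nearestDist p lab false x) :
    x ∈ voronoiOcc p lab := by
  by_contra hout
  have hlt : nearestDist p lab false x < nearestDist p lab true x := not_le.1 hout
  have hq_nearest : ∀ b, dist x q ≤ nearestDist p lab b x
    | false => hx
    | true => hx.trans hlt.le
  exact hout <| hcell fun k ↦ (hq_nearest (lab k)).trans (nearestDist_le_dist p lab x k)

theorem occupancy_unchanged_if_cell_inside_general {d K : ℕ}
    (p : Fin K → EuclideanSpace ℝ (Fin d)) (lab : Fin K → Bool)
    (h1 : ∃ k, lab k = true)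
    (q : EuclideanSpace ℝ (Fin d))
    (hcell : {x : EuclideanSpace ℝ (Fin d) | ∀ k, dist x q ≤ dist x (p k)} ⊆
      voronoiOcc p lab) :
    voronoiOcc (Fin.snoc p q) (Fin.snoc lab true) = voronoiOcc p lab := by
  ext x
  rw [mem_voronoiOcc, mem_voronoiOcc, nearestDist_snoc_self p q lab x h1,
    nearestDist_snoc_of_ne p q lab x (by decide), min_le_iff]
  exact or_iff_right_of_imp (mem_voronoiOcc_of_dist_le_nearestDist_false hcell)

theorem occupancy_unchanged_if_cell_inside {d K : ℕ}
    (p : Fin K → EuclideanSpace ℝ (Fin d)) (lab : Fin K → Bool)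
    (hinj : Function.Injective p)
    (h1 : ∃ k, lab k = true) (h0 : ∃ k, lab k = false)
    (q : EuclideanSpace ℝ (Fin d)) (hq : ∀ k, q ≠ p k)
    (hcell : {x : EuclideanSpace ℝ (Fin d) | ∀ k, dist x q ≤ dist x (p k)} ⊆
      voronoiOcc p lab) :
    voronoiOcc (Fin.snoc p q) (Fin.snoc lab true) = voronoiOcc p lab :=
  occupancy_unchanged_if_cell_inside_general p lab h1 q hcell
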